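/- arXiv:cs/0505063 — 9 statements merged into one kernel-verified Lean document; each statement's English description precedes it below -/
import Mathlib

section
/- Let P be a probability measure on a 1-bounded pseudometric space (M,m), and let U_0, U_1, …, U_n be a measurable partition of M with diameter(U_i) ≤ ε for all i ≥ 1 and P(U_0) ≤ ε. Choose points x_i ∈ U_i and define the discrete probability measure Q by Q({x_i}) = P(U_i). Then W(m)(P,Q) ≤ 2ε. -/
/-!
Split `∫ h dP` along the partition and compare the piece over `Uᵢ` with the mass `P(Uᵢ) h(xᵢ)`
that `Q` puts at `xᵢ`. For `i ≠ 0` the Lipschitz and diameter bounds give `h ≤ h(xᵢ) + ε` on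
`Uᵢ`; on `U₀` only `0 ≤ h ≤ 1` is available, so `h ≤ h(x₀) + 1` there. Summing, the gap is at
most `ε ∑ P(Uᵢ) + P(U₀) ≤ 2ε`.
-/

open MeasureTheory

def IsPseudometric {M : Type*} (m : M → M → ℝ) : Prop :=
  (∀ x, m x x = 0) ∧ (∀ x y, m x y = m y x) ∧ (∀ x y z, m x z ≤ m x y + m y z)

def Bounded1 {M : Type*} (m : M → M → ℝ) : Prop := ∀ x y, 0 ≤ m x y ∧ m x y ≤ 1

/-- Wasserstein distance (primal/Kantorovich duality form): sup over 1-bounded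
functions `h` that are Lipschitz with respect to `m`, of `∫ h dP − ∫ h dQ`. -/
noncomputable def W {M : Type*} [MeasurableSpace M] (m : M → M → ℝ)
    (P Q : Measure M) : ℝ :=
  sSup {x | ∃ h : M → ℝ, Measurable h ∧ (∀ s, 0 ≤ h s ∧ h s ≤ 1) ∧
    (∀ s s', |h s - h s'| ≤ m s s') ∧ x = (∫ s, h s ∂P) - (∫ s, h s ∂Q)}

open Function

section Partition

variable {M ι : Type*} [MeasurableSpace M] [Fintype ι]

lemma integral_finset_sum_smul_dirac {c : ι → ENNReal} (hc : ∀ i, c i ≠ ⊤) (x : ι → M)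
    {h : M → ℝ} (hh : StronglyMeasurable h) :
    ∫ s, h s ∂(∑ i, c i • Measure.dirac (x i)) = ∑ i, (c i).toReal * h (x i) := by
  rw [integral_finsetSum_measure fun i _ =>
    (integrable_dirac' hh enorm_lt_top).smul_measure (hc i)]
  simp only [integral_smul_measure, integral_dirac' h _ hh, smul_eq_mul]

variable {μ : Measure M} {U : ι → Set M}

lemma integral_le_sum_of_le_on_partition [IsFiniteMeasure μ] (hU : ∀ i, MeasurableSet (U i))
    (hdisj : Pairwise (Disjoint on U)) (hcover : ⋃ i, U i = Set.univ) {h : M → ℝ}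
    (hint : Integrable h μ) {a : ι → ℝ} (hle : ∀ i, ∀ s ∈ U i, h s ≤ a i) :
    ∫ s, h s ∂μ ≤ ∑ i, μ.real (U i) * a i := by
  rw [← setIntegral_univ, ← hcover, integral_iUnion_fintype hU hdisj fun i => hint.integrableOn]
  gcongr with i
  calc ∫ s in U i, h s ∂μ ≤ ∫ _ in U i, a i ∂μ :=
        setIntegral_mono_on hint.integrableOn integrableOn_const (hU i) (hle i)
    _ = μ.real (U i) * a i := setIntegral_const _

lemma sum_measureReal_eq_one_of_partition [IsProbabilityMeasure μ]
    (hU : ∀ i, MeasurableSet (U i)) (hdisj : Pairwise (Disjoint on U))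
    (hcover : ⋃ i, U i = Set.univ) :
    ∑ i, μ.real (U i) = 1 := by
  rw [← measureReal_iUnion_fintype hdisj hU, hcover, probReal_univ]

end Partition

theorem wasserstein_discrete_approx_general {M : Type*} [MeasurableSpace M]
    (m : M → M → ℝ)
    (P : Measure M) [IsProbabilityMeasure P]
    (n : ℕ) (U : Fin (n + 1) → Set M)
    (hmeasU : ∀ i, MeasurableSet (U i))
    (hdisj : Pairwise fun i j => Disjoint (U i) (U j))
    (hcover : (⋃ i, U i) = Set.univ)
    (ε : ℝ)
    (hdiam : ∀ i : Fin (n + 1), i ≠ 0 → ∀ x ∈ U i, ∀ y ∈ U i, m x y ≤ ε)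
    (hU0 : (P (U 0)).toReal ≤ ε)
    (x : Fin (n + 1) → M) (hx : ∀ i, x i ∈ U i) :
    W m P (∑ i, P (U i) • Measure.dirac (x i)) ≤ 2 * ε := by
  have hε : 0 ≤ ε := ENNReal.toReal_nonneg.trans hU0
  refine Real.sSup_le ?_ (by linarith)
  rintro _ ⟨h, hmeas, hbd, hlip, rfl⟩
  have hcell : ∀ i, ∀ s ∈ U i, h s ≤ h (x i) + (ε + if i = 0 then 1 else 0) := by
    intro i s hs
    split_ifs with hi
    · linarith [(hbd s).2, (hbd (x i)).1]
    · linarith [(le_abs_self _).trans (hlip s (x i)), hdiam i hi s hs (x i) (hx i)]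
  have hint : Integrable h P := .of_bound hmeas.aestronglyMeasurable 1 <| ae_of_all _ fun s => by
    rw [Real.norm_eq_abs, abs_le]; constructor <;> linarith [hbd s]
  have hP := integral_le_sum_of_le_on_partition hmeasU hdisj hcover hint hcell
  have hslack : ∑ i, P.real (U i) * (ε + if i = 0 then 1 else 0) = ε + P.real (U 0) := by
    simp [mul_add, Finset.sum_add_distrib, ← Finset.sum_mul,
      sum_measureReal_eq_one_of_partition hmeasU hdisj hcover]
  rw [integral_finset_sum_smul_dirac (fun i => measure_ne_top P _) x hmeas.stronglyMeasurable]
  simp only [mul_add, Finset.sum_add_distrib, measureReal_def] at hP hslack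
  linarith

theorem wasserstein_discrete_approx {M : Type*} [MeasurableSpace M]
    (m : M → M → ℝ) (hm : IsPseudometric m) (hb : Bounded1 m)
    (P : Measure M) [IsProbabilityMeasure P]
    (n : ℕ) (U : Fin (n + 1) → Set M)
    (hmeasU : ∀ i, MeasurableSet (U i))
    (hdisj : Pairwise fun i j => Disjoint (U i) (U j))
    (hcover : (⋃ i, U i) = Set.univ)
    (ε : ℝ) (hε : 0 < ε)
    (hdiam : ∀ i : Fin (n + 1), i ≠ 0 → ∀ x ∈ U i, ∀ y ∈ U i, m x y ≤ ε)
    (hU0 : (P (U 0)).toReal ≤ ε)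
    (x : Fin (n + 1) → M) (hx : ∀ i, x i ∈ U i) :
    W m P (∑ i, P (U i) • Measure.dirac (x i)) ≤ 2 * ε :=
  wasserstein_discrete_approx_general m P n U hmeasU hdisj hcover ε hdiam hU0 x hx
end

section
/- Let f : [0,∞) → M be cadlag, let r ≥ 0, and let u : [0,r) → M be continuous with m(u(r'), f(0)) ≤ r for all 0 ≤ r' < r. Define the delayed function delay_u(f)(t) = f(t−r) for t ≥ r and u(t) for 0 ≤ t < r. Then J(m)(delay_u(f), f) ≤ r. -/
/-- A function `f : [0,∞) → M` (modelled on all of `ℝ`, with only `[0,∞)` relevant)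
is cadlag with respect to the pseudometric `m`: right-continuous with left limits. -/
def Cadlag {M : Type*} (m : M → M → ℝ) (f : ℝ → M) : Prop :=
  (∀ t : ℝ, 0 ≤ t → ∀ ε > (0:ℝ), ∃ δ > (0:ℝ), ∀ t', t ≤ t' → t' < t + δ →
      m (f t) (f t') < ε) ∧
  (∀ t : ℝ, 0 < t → ∃ L : M, ∀ ε > (0:ℝ), ∃ δ > (0:ℝ), ∀ t', t - δ < t' → 0 ≤ t' →
      t' < t → m (f t') L < ε)

/-- The Skorohod J2 distance: the Hausdorff distance between the graphs of `f` and `g`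
in `[0,∞) × M` with the metric `d((x,s),(y,t)) = max (|x-y|) (m s t)`. -/
noncomputable def J {M : Type*} (m : M → M → ℝ) (f g : ℝ → M) : ℝ :=
  max
    (⨆ t : Set.Ici (0:ℝ), ⨅ t' : Set.Ici (0:ℝ), max (m (f t) (g t')) |(t:ℝ) - (t':ℝ)|)
    (⨆ t' : Set.Ici (0:ℝ), ⨅ t : Set.Ici (0:ℝ), max (m (f t) (g t')) |(t:ℝ) - (t':ℝ)|)

theorem skorohod_delay {M : Type*}
    (m : M → M → ℝ) (hm : IsPseudometric m) (hb : Bounded1 m)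
    (f : ℝ → M) (hf : Cadlag m f)
    (r : ℝ) (hr : 0 ≤ r) (u : ℝ → M)
    (hu_cont : ∀ t, 0 ≤ t → t < r → ∀ ε > (0:ℝ), ∃ δ > (0:ℝ),
      ∀ t', 0 ≤ t' → t' < r → |t' - t| < δ → m (u t) (u t') < ε)
    (hu_close : ∀ r', 0 ≤ r' → r' < r → m (u r') (f 0) ≤ r) :
    J m (fun t => if t < r then u t else f (t - r)) f ≤ r := by
  obtain ⟨hm0, hms, hmt⟩ := hm
  have hnn0 : ∀ x y, 0 ≤ m x y := fun x y => (hb x y).1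
  set g : ℝ → M := fun t => if t < r then u t else f (t - r) with hg
  have hbdd : ∀ F : Set.Ici (0:ℝ) → ℝ, (∀ i, 0 ≤ F i) → BddBelow (Set.range F) := by
    intro F hF
    refine ⟨0, ?_⟩
    rintro x ⟨i, rfl⟩
    exact hF i
  apply max_le
  · apply ciSup_le
    rintro ⟨t, ht⟩
    have ht : (0:ℝ) ≤ t := ht
    by_cases htr : t < r
    · refine le_trans (ciInf_le (hbdd _ fun i => le_max_of_le_left (hnn0 _ _))
        (⟨0, Set.self_mem_Ici⟩ : Set.Ici (0:ℝ))) ?_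
      simp only [hg, if_pos htr]
      apply max_le (hu_close t ht htr)
      rw [sub_zero, abs_of_nonneg ht]
      exact le_of_lt htr
    · push_neg at htr
      have h0 : (0:ℝ) ≤ t - r := sub_nonneg.mpr htr
      refine le_trans (ciInf_le (hbdd _ fun i => le_max_of_le_left (hnn0 _ _))
        (⟨t - r, Set.mem_Ici.mpr h0⟩ : Set.Ici (0:ℝ))) ?_
      simp only [hg, if_neg (not_lt.mpr htr)]
      apply max_le
      · rw [hm0]; exact hr
      · rw [sub_sub_cancel, abs_of_nonneg hr]
  · apply ciSup_le
    rintro ⟨t', ht'⟩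
    have ht' : (0:ℝ) ≤ t' := ht'
    have h0 : (0:ℝ) ≤ t' + r := by linarith
    refine le_trans (ciInf_le (hbdd _ fun i => le_max_of_le_left (hnn0 _ _))
      (⟨t' + r, Set.mem_Ici.mpr h0⟩ : Set.Ici (0:ℝ))) ?_
    simp only [hg, if_neg (not_lt.mpr (by linarith : r ≤ t' + r)), add_sub_cancel_right]
    apply max_le
    · rw [hm0]; exact hr
    · rw [add_sub_cancel_left, abs_of_nonneg hr]
end

section
/- Let {a_n}, {c_n} be increasing sequences converging to 1/2 with a_n < c_n, and define g_n(r) = 0 for r < a_n, 1 for a_n ≤ r < c_n, 0 for c_n ≤ r < 1/2, and 1 for r ≥ 1/2. Then g_n converges to the step function f_{1/2} (which is 0 on [0,1/2) and 1 on [1/2,∞)) in the Skorohod J2 metric. -/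
lemma Jnonneg (f g : ℝ → ℝ) : 0 ≤ J (fun x y : ℝ => |x - y|) f g := by
  refine le_max_of_le_left (Real.iSup_nonneg fun t => ?_)
  exact le_ciInf fun t' => le_max_of_le_left (abs_nonneg _)

lemma Jbound (A C : ℝ) (hA : A < 1/2) (hC : C < 1/2) (hAC : A < C) :
    J (fun x y : ℝ => |x - y|)
      (fun r => if r < A then (0:ℝ) else if r < C then 1 else if r < (1/2:ℝ) then 0 else 1)
      (fun r => if r < (1/2:ℝ) then (0:ℝ) else 1) ≤ 1/2 - A := by
  set f : ℝ → ℝ := fun r => if r < A then (0:ℝ) else if r < C then 1 else if r < (1/2:ℝ) then 0 else 1 with hf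
  set g : ℝ → ℝ := fun r => if r < (1/2:ℝ) then (0:ℝ) else 1 with hg
  have hfval : ∀ r, f r = if r < A then (0:ℝ) else if r < C then 1 else if r < (1/2:ℝ) then 0 else 1 := fun r => rfl
  have hgval : ∀ r, g r = if r < (1/2:ℝ) then (0:ℝ) else 1 := fun r => rfl
  have hb : (0:ℝ) ≤ 1/2 - A := by linarith
  have hbdd1 : ∀ (t : Set.Ici (0:ℝ)), BddBelow (Set.range fun t' : Set.Ici (0:ℝ) =>
      max (|f t - g t'|) |(t:ℝ) - (t':ℝ)|) := fun t =>
    ⟨0, by rintro x ⟨t', rfl⟩; exact le_max_of_le_left (abs_nonneg _)⟩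
  have hbdd2 : ∀ (t' : Set.Ici (0:ℝ)), BddBelow (Set.range fun t : Set.Ici (0:ℝ) =>
      max (|f t - g t'|) |(t:ℝ) - (t':ℝ)|) := fun t' =>
    ⟨0, by rintro x ⟨t, rfl⟩; exact le_max_of_le_left (abs_nonneg _)⟩
  apply max_le
  · apply ciSup_le
    rintro ⟨t, ht⟩
    simp only [Set.mem_Ici] at ht
    by_cases h1 : t < A
    · refine ciInf_le_of_le (hbdd1 _) ⟨t, ht⟩ ?_
      have h2 : f t = 0 := by rw [hfval, if_pos h1]
      have h3 : g t = 0 := by rw [hgval, if_pos (lt_trans h1 hA)]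
      rw [h2, h3]
      simpa using hb
    · by_cases h2 : t < C
      · refine ciInf_le_of_le (hbdd1 _) ⟨1/2, by norm_num⟩ ?_
        have h3 : f t = 1 := by rw [hfval, if_neg h1, if_pos h2]
        have h4 : g (1/2 : ℝ) = 1 := by rw [hgval, if_neg (lt_irrefl _)]
        have h5 : |t - (1/2:ℝ)| = 1/2 - t := by
          rw [abs_of_nonpos (by linarith)]; ring
        show |f t - g (1/2:ℝ)| ⊔ |t - (1/2:ℝ)| ≤ 1/2 - A
        rw [h3, h4, h5]
        push_neg at h1
        exact max_le (by simpa using hb) (by linarith)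
      · refine ciInf_le_of_le (hbdd1 _) ⟨t, ht⟩ ?_
        have h3 : f t = g t := by rw [hfval, hgval, if_neg h1, if_neg h2]
        show |f t - g t| ⊔ |t - t| ≤ 1/2 - A
        rw [h3]
        simpa using hb
  · apply ciSup_le
    rintro ⟨t', ht'⟩
    simp only [Set.mem_Ici] at ht'
    by_cases h1 : A ≤ t' ∧ t' < C
    · have hC0 : (0:ℝ) ≤ C := le_of_lt (lt_of_le_of_lt ht' h1.2)
      refine ciInf_le_of_le (hbdd2 _) ⟨C, hC0⟩ ?_
      have h3 : f C = 0 := by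
        rw [hfval, if_neg (not_lt.mpr (le_of_lt hAC)), if_neg (lt_irrefl _), if_pos hC]
      have h4 : g t' = 0 := by rw [hgval, if_pos (lt_trans h1.2 hC)]
      have h5 : |C - t'| = C - t' := abs_of_nonneg (by linarith [h1.2])
      show |f C - g t'| ⊔ |C - t'| ≤ 1/2 - A
      rw [h3, h4, h5]
      exact max_le (by simpa using hb) (by linarith [h1.1])
    · refine ciInf_le_of_le (hbdd2 _) ⟨t', ht'⟩ ?_
      have h3 : f t' = g t' := by
        rcases not_and_or.mp h1 with h | h
        · push_neg at h
          rw [hfval, hgval, if_pos h, if_pos (lt_trans h hA)]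
        · push_neg at h
          rw [hfval, hgval, if_neg (not_lt.mpr (le_trans (le_of_lt hAC) h)),
            if_neg (not_lt.mpr h)]
      show |f t' - g t'| ⊔ |t' - t'| ≤ 1/2 - A
      rw [h3]
      simpa using hb

theorem skorohod_double_jump_converges
    (a c : ℕ → ℝ) (hamono : StrictMono a) (hcmono : StrictMono c)
    (halim : Filter.Tendsto a Filter.atTop (nhds (1/2 : ℝ)))
    (hclim : Filter.Tendsto c Filter.atTop (nhds (1/2 : ℝ)))
    (hac : ∀ n, a n < c n) :
    Filter.Tendsto
      (fun n => J (fun x y : ℝ => |x - y|)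
        (fun r => if r < a n then (0:ℝ) else if r < c n then 1
                  else if r < (1/2 : ℝ) then 0 else 1)
        (fun r => if r < (1/2 : ℝ) then (0:ℝ) else 1))
      Filter.atTop (nhds 0) := by
  have ha2 : ∀ n, a n < 1/2 := fun n =>
    lt_of_lt_of_le (hamono n.lt_succ_self) (hamono.monotone.ge_of_tendsto halim (n+1))
  have hc2 : ∀ n, c n < 1/2 := fun n =>
    lt_of_lt_of_le (hcmono n.lt_succ_self) (hcmono.monotone.ge_of_tendsto hclim (n+1))
  have hlim : Filter.Tendsto (fun n => 1/2 - a n) Filter.atTop (nhds 0) := by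
    have := (tendsto_const_nhds (x := (1/2:ℝ)) (f := Filter.atTop (α := ℕ))).sub halim
    simpa using this
  exact squeeze_zero (fun n => Jnonneg _ _) (fun n => Jbound (a n) (c n) (ha2 n) (hc2 n) (hac n)) hlim
end

section
/- Let {b'_n} be an increasing sequence converging to 1/2, and define f_{b'_n}(r) = 0 for r < b'_n, 1 for b'_n ≤ r < 1/2, and 0 for r ≥ 1/2. Then J(m)(f_{b'_n}, 0) = 1 for every n, where 0 denotes the constant zero function; in particular the sequence does not converge to the constant zero function in the Skorohod J2 metric. -/
open Set Filter

theorem StrictMono.lt_of_tendsto {α ι : Type*} [TopologicalSpace α] [Preorder α]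
    [OrderClosedTopology α] [SemilatticeSup ι] [NoMaxOrder ι] {f : ι → α}
    {a : α} (hf : StrictMono f) (ha : Tendsto f atTop (nhds a)) (i : ι) : f i < a := by
  obtain ⟨j, hij⟩ := exists_gt i
  exact (hf hij).trans_le (hf.monotone.ge_of_tendsto ha j)

section HausdorffConst

variable {M : Type*} {m : M → M → ℝ} {f : ℝ → M} {c : M}

theorem ciInf_max_abs_sub_eq {a : ℝ} (ha : 0 ≤ a) (t : Ici (0 : ℝ)) :
    ⨅ t' : Ici (0 : ℝ), max a |(t : ℝ) - t'| = a := by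
  refine le_antisymm ?_ (le_ciInf fun _ => le_max_left _ _)
  calc ⨅ t' : Ici (0 : ℝ), max a |(t : ℝ) - t'|
      ≤ max a |(t : ℝ) - t| := ciInf_le ⟨0, by rintro _ ⟨t', rfl⟩; positivity⟩ t
    _ = a := by simp [ha]

theorem ciInf_max_abs_sub_le {u : ℝ → ℝ} {t' : Ici (0 : ℝ)} (hu : 0 ≤ u t') :
    ⨅ t : Ici (0 : ℝ), max (u t) |(t : ℝ) - t'| ≤ u t' :=
  calc ⨅ t : Ici (0 : ℝ), max (u t) |(t : ℝ) - t'|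
      ≤ max (u t') |(t' : ℝ) - t'| := ciInf_le ⟨0, by rintro _ ⟨t, rfl⟩; positivity⟩ t'
    _ = u t' := by simp [hu]

theorem J_const_right (hm : ∀ x, 0 ≤ m x c)
    (hbdd : BddAbove (range fun t : Ici (0 : ℝ) => m (f t) c)) :
    J m f (fun _ => c) = ⨆ t : Ici (0 : ℝ), m (f t) c := by
  have hgraph : (⨆ t : Ici (0 : ℝ), ⨅ t' : Ici (0 : ℝ), max (m (f t) c) |(t : ℝ) - t'|)
      = ⨆ t : Ici (0 : ℝ), m (f t) c := by
    simp only [ciInf_max_abs_sub_eq (hm _)]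
  have hconst : (⨆ t' : Ici (0 : ℝ), ⨅ t : Ici (0 : ℝ), max (m (f t) c) |(t : ℝ) - t'|)
      ≤ ⨆ t : Ici (0 : ℝ), m (f t) c :=
    ciSup_le fun t' =>
      (ciInf_max_abs_sub_le (u := fun t => m (f t) c) (hm (f t'))).trans (le_ciSup hbdd t')
  rw [J, hgraph, max_eq_left hconst]

end HausdorffConst

noncomputable def unitPulse (a b : ℝ) (r : ℝ) : ℝ :=
  if r < a then 0 else if r < b then 1 else 0

theorem unitPulse_eq_zero_or_one (a b r : ℝ) : unitPulse a b r = 0 ∨ unitPulse a b r = 1 := by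
  unfold unitPulse; split_ifs <;> simp

theorem abs_unitPulse_le_one (a b r : ℝ) : |unitPulse a b r| ≤ 1 := by
  rcases unitPulse_eq_zero_or_one a b r with h | h <;> simp [h]

theorem ciSup_abs_unitPulse {a b : ℝ} (hab : a < b) (hb : 0 < b) :
    ⨆ t : Ici (0 : ℝ), |unitPulse a b t| = 1 := by
  have hbdd : BddAbove (range fun t : Ici (0 : ℝ) => |unitPulse a b t|) :=
    ⟨1, by rintro _ ⟨t, rfl⟩; exact abs_unitPulse_le_one a b t⟩
  have hpeak : unitPulse a b (max a 0) = 1 := by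
    rw [unitPulse, if_neg (not_lt.mpr (le_max_left _ _)), if_pos (max_lt hab hb)]
  refine le_antisymm (ciSup_le fun t => abs_unitPulse_le_one a b t) ?_
  calc (1 : ℝ) = |unitPulse a b (max a 0)| := by rw [hpeak, abs_one]
    _ ≤ ⨆ t : Ici (0 : ℝ), |unitPulse a b t| :=
      le_ciSup hbdd ⟨max a 0, mem_Ici.mpr (le_max_right _ _)⟩

theorem J_unitPulse_zero {a b : ℝ} (hab : a < b) (hb : 0 < b) :
    J (fun x y : ℝ => |x - y|) (unitPulse a b) (fun _ => 0) = 1 := by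
  rw [J_const_right (m := fun x y : ℝ => |x - y|) (fun _ => abs_nonneg _)]
  · simpa only [sub_zero] using ciSup_abs_unitPulse hab hb
  · exact ⟨1, by rintro _ ⟨t, rfl⟩; simpa only [sub_zero] using abs_unitPulse_le_one a b t⟩

theorem skorohod_jump_detected
    (b : ℕ → ℝ) (hmono : StrictMono b)
    (hlim : Filter.Tendsto b Filter.atTop (nhds (1/2 : ℝ))) :
    (∀ n, J (fun x y : ℝ => |x - y|)
        (fun r => if r < b n then (0:ℝ) else if r < (1/2 : ℝ) then 1 else 0)
        (fun _ => (0:ℝ)) = 1) ∧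
    ¬ Filter.Tendsto
        (fun n => J (fun x y : ℝ => |x - y|)
          (fun r => if r < b n then (0:ℝ) else if r < (1/2 : ℝ) then 1 else 0)
          (fun _ => (0:ℝ)))
        Filter.atTop (nhds 0) := by
  have hJ : ∀ n, J (fun x y : ℝ => |x - y|) (unitPulse (b n) (1/2)) (fun _ => 0) = 1 :=
    fun n => J_unitPulse_zero (hmono.lt_of_tendsto hlim n) one_half_pos
  refine ⟨hJ, fun hzero => ?_⟩
  have hone : Tendsto (fun n => J (fun x y : ℝ => |x - y|) (unitPulse (b n) (1/2))
      (fun _ => 0)) atTop (nhds 1) := by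
    simp only [hJ, tendsto_const_nhds]
  exact one_ne_zero (tendsto_nhds_unique hone hzero)
end

section
/- Let {ε_n} be a decreasing sequence converging to 0, d_n = 1/2 − ε_n/2, e_n = 1/2 + ε_n/2, and define the continuous functions h_n(r) = 0 for r < d_n, (r − d_n)/ε_n for d_n ≤ r < e_n, and 1 for r ≥ e_n. Then J(m)(h_n, f_{1/2}) ≥ 1/2 for all n, where f_{1/2} is the step function that is 0 on [0,1/2) and 1 on [1/2,∞); in particular h_n does not converge to f_{1/2} in the Skorohod J2 metric. -/
theorem skorohod_continuous_approx_fails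
    (ε : ℕ → ℝ) (hanti : StrictAnti ε)
    (hlim : Filter.Tendsto ε Filter.atTop (nhds (0:ℝ)))
    (hpos : ∀ n, 0 < ε n) :
    (∀ n, (1/2 : ℝ) ≤
        J (fun x y : ℝ => |x - y|)
          (fun r => if r < 1/2 - ε n / 2 then (0:ℝ)
                    else if r < 1/2 + ε n / 2 then (r - (1/2 - ε n / 2)) / ε n
                    else 1)
          (fun r => if r < (1/2 : ℝ) then (0:ℝ) else 1)) ∧
    ¬ Filter.Tendsto
        (fun n => J (fun x y : ℝ => |x - y|)
          (fun r => if r < 1/2 - ε n / 2 then (0:ℝ)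
                    else if r < 1/2 + ε n / 2 then (r - (1/2 - ε n / 2)) / ε n
                    else 1)
          (fun r => if r < (1/2 : ℝ) then (0:ℝ) else 1))
        Filter.atTop (nhds 0) := by
  have key : ∀ n, (1/2 : ℝ) ≤
      J (fun x y : ℝ => |x - y|)
        (fun r => if r < 1/2 - ε n / 2 then (0:ℝ)
                  else if r < 1/2 + ε n / 2 then (r - (1/2 - ε n / 2)) / ε n
                  else 1)
        (fun r => if r < (1/2 : ℝ) then (0:ℝ) else 1) := by
    intro n
    have hε := hpos n
    set f : ℝ → ℝ := fun r => if r < 1/2 - ε n / 2 then (0:ℝ)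
        else if r < 1/2 + ε n / 2 then (r - (1/2 - ε n / 2)) / ε n else 1 with hf
    set g : ℝ → ℝ := fun r => if r < (1/2 : ℝ) then (0:ℝ) else 1 with hg
    have hfmem : (1/2 : ℝ) ∈ Set.Ici (0:ℝ) := by norm_num
    have hfhalf : f (1/2) = 1/2 := by
      simp only [hf]
      rw [if_neg (by linarith), if_pos (by linarith)]
      field_simp
      ring
    have hfrange : ∀ t : ℝ, 0 ≤ f t ∧ f t ≤ 1 := by
      intro t
      simp only [hf]
      split_ifs with h1 h2
      · norm_num
      · constructor
        · apply div_nonneg _ hε.le; linarith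
        · rw [div_le_one hε]; linarith
      · norm_num
    have hgrange : ∀ t : ℝ, g t = 0 ∨ g t = 1 := by
      intro t; simp only [hg]; split_ifs <;> simp
    -- bound below for each inner infimum family
    have hbb : ∀ t : Set.Ici (0:ℝ), BddBelow (Set.range fun t' : Set.Ici (0:ℝ) =>
        max (|f t - g t'|) |(t:ℝ) - (t':ℝ)|) := by
      intro t
      exact ⟨0, by rintro x ⟨t', rfl⟩; exact le_trans (abs_nonneg _) (le_max_left _ _)⟩
    refine le_trans ?_ (le_max_left _ _)
    have hBdd : BddAbove (Set.range fun t : Set.Ici (0:ℝ) =>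
        ⨅ t' : Set.Ici (0:ℝ), max (|f t - g t'|) |(t:ℝ) - (t':ℝ)|) := by
      refine ⟨1, ?_⟩
      rintro x ⟨t, rfl⟩
      refine ciInf_le_of_le (hbb t) t ?_
      simp only [sub_self, abs_zero]
      refine max_le ?_ zero_le_one
      rcases hgrange t with h | h <;> rw [h] <;>
        rcases hfrange t with ⟨h0, h1⟩ <;> rw [abs_le] <;> constructor <;> linarith
    refine le_ciSup_of_le hBdd ⟨1/2, hfmem⟩ ?_
    refine le_ciInf ?_
    intro t'
    refine le_trans ?_ (le_max_left _ _)
    rw [hfhalf]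
    rcases hgrange t' with h | h <;> rw [h] <;> norm_num <;> exact le_abs_self _
  refine ⟨key, ?_⟩
  intro hT
  have : ∀ᶠ n in Filter.atTop, (fun n => J (fun x y : ℝ => |x - y|)
      (fun r => if r < 1/2 - ε n / 2 then (0:ℝ)
                else if r < 1/2 + ε n / 2 then (r - (1/2 - ε n / 2)) / ε n
                else 1)
      (fun r => if r < (1/2 : ℝ) then (0:ℝ) else 1)) n < 1/2 :=
    hT (Iio_mem_nhds (by norm_num))
  rcases this.exists with ⟨n, hn⟩
  exact absurd (key n) (not_le.mpr hn)
end

section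
/- For any cadlag function f : [0,∞) → [0,1], any 1-Lipschitz function h : [0,1] → [0,1], and any cadlag g with J(m)(f,g) < ε: for all t, |L(h)(f)(t) − L(h)(g)(t)| < 2ε, where L(h)(f)(t) = sup_{t'} { h(f(t')) − |t'−t| }. -/
/-- The time-smoothed test `L(h)(f)(t) = sup_{t' ≥ 0} (h (f t') − |t' − t|)`. -/
noncomputable def SmoothL (h : ℝ → ℝ) (f : ℝ → ℝ) (t : ℝ) : ℝ :=
  ⨆ t' : Set.Ici (0:ℝ), (h (f t') - |(t':ℝ) - t|)

theorem smoothL_close_of_skorohod_close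
    (f g : ℝ → ℝ)
    (hf_range : ∀ t, f t ∈ Set.Icc (0:ℝ) 1) (hg_range : ∀ t, g t ∈ Set.Icc (0:ℝ) 1)
    (hf : Cadlag (fun x y : ℝ => |x - y|) f) (hg : Cadlag (fun x y : ℝ => |x - y|) g)
    (h : ℝ → ℝ) (hh_lip : LipschitzWith 1 h)
    (hh_range : ∀ x, x ∈ Set.Icc (0:ℝ) 1 → h x ∈ Set.Icc (0:ℝ) 1)
    (ε : ℝ) (hJ : J (fun x y : ℝ => |x - y|) f g < ε) :
    ∀ t : ℝ, |SmoothL h f t - SmoothL h g t| < 2 * ε := by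
  intro t
  have hne : Nonempty (Set.Ici (0:ℝ)) := ⟨⟨0, Set.mem_Ici.mpr le_rfl⟩⟩
  set Jv := J (fun x y : ℝ => |x - y|) f g with hJv
  set ε₀ : ℝ := (Jv + ε) / 2 with hε₀def
  have hJε₀ : Jv < ε₀ := by simp only [hε₀def]; linarith
  have hε₀ε : ε₀ < ε := by simp only [hε₀def]; linarith
  -- distance bound for values
  have hdist : ∀ x y : ℝ, x ∈ Set.Icc (0:ℝ) 1 → y ∈ Set.Icc (0:ℝ) 1 → |x - y| ≤ 1 := by
    intro x y hx hy
    rw [abs_sub_le_iff]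
    constructor <;> linarith [hx.1, hx.2, hy.1, hy.2]
  -- Lipschitz estimate
  have hlip : ∀ x y : ℝ, |h x - h y| ≤ |x - y| := by
    intro x y
    have := hh_lip.dist_le_mul x y
    simpa [Real.dist_eq] using this
  -- boundedness of the sup in SmoothL
  have hbddf : BddAbove (Set.range fun t' : Set.Ici (0:ℝ) => h (f t') - |(t':ℝ) - t|) := by
    refine ⟨1, ?_⟩
    rintro _ ⟨s, rfl⟩
    try dsimp only
    have h1 := (hh_range _ (hf_range s)).2
    have h2 : (0:ℝ) ≤ |(s:ℝ) - t| := abs_nonneg _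
    linarith
  have hbddg : BddAbove (Set.range fun t' : Set.Ici (0:ℝ) => h (g t') - |(t':ℝ) - t|) := by
    refine ⟨1, ?_⟩
    rintro _ ⟨s, rfl⟩
    try dsimp only
    have h1 := (hh_range _ (hg_range s)).2
    have h2 : (0:ℝ) ≤ |(s:ℝ) - t| := abs_nonneg _
    linarith
  -- key existence claims
  have key1 : ∀ s : Set.Ici (0:ℝ), ∃ u : Set.Ici (0:ℝ),
      max |f u - g s| |(u:ℝ) - (s:ℝ)| < ε₀ := by
    intro s
    have hbdd : BddAbove (Set.range fun s : Set.Ici (0:ℝ) =>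
        ⨅ u : Set.Ici (0:ℝ), max |f u - g s| |(u:ℝ) - (s:ℝ)|) := by
      refine ⟨1, ?_⟩
      rintro _ ⟨s, rfl⟩
      try dsimp only
      have hbb : BddBelow (Set.range fun u : Set.Ici (0:ℝ) =>
          max |f u - g s| |(u:ℝ) - (s:ℝ)|) := by
        refine ⟨0, ?_⟩
        rintro _ ⟨u, rfl⟩
        try dsimp only
        exact le_max_of_le_left (abs_nonneg _)
      refine le_trans (ciInf_le hbb s) ?_
      refine max_le (hdist _ _ (hf_range s) (hg_range s)) ?_
      simp
    have hinf : (⨅ u : Set.Ici (0:ℝ), max |f u - g s| |(u:ℝ) - (s:ℝ)|) < ε₀ := by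
      refine lt_of_le_of_lt (le_trans (le_ciSup hbdd s) ?_) hJε₀
      exact le_max_right _ _
    obtain ⟨u, hu⟩ := exists_lt_of_ciInf_lt hinf
    exact ⟨u, hu⟩
  have key2 : ∀ s : Set.Ici (0:ℝ), ∃ u : Set.Ici (0:ℝ),
      max |f s - g u| |(s:ℝ) - (u:ℝ)| < ε₀ := by
    intro s
    have hbdd : BddAbove (Set.range fun s : Set.Ici (0:ℝ) =>
        ⨅ u : Set.Ici (0:ℝ), max |f s - g u| |(s:ℝ) - (u:ℝ)|) := by
      refine ⟨1, ?_⟩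
      rintro _ ⟨s, rfl⟩
      try dsimp only
      have hbb : BddBelow (Set.range fun u : Set.Ici (0:ℝ) =>
          max |f s - g u| |(s:ℝ) - (u:ℝ)|) := by
        refine ⟨0, ?_⟩
        rintro _ ⟨u, rfl⟩
        try dsimp only
        exact le_max_of_le_left (abs_nonneg _)
      refine le_trans (ciInf_le hbb s) ?_
      refine max_le (hdist _ _ (hf_range s) (hg_range s)) ?_
      simp
    have hinf : (⨅ u : Set.Ici (0:ℝ), max |f s - g u| |(s:ℝ) - (u:ℝ)|) < ε₀ := by
      refine lt_of_le_of_lt (le_trans (le_ciSup hbdd s) ?_) hJε₀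
      exact le_max_left _ _
    obtain ⟨u, hu⟩ := exists_lt_of_ciInf_lt hinf
    exact ⟨u, hu⟩
  -- SmoothL g ≤ SmoothL f + 2ε₀
  have hgf : SmoothL h g t ≤ SmoothL h f t + 2 * ε₀ := by
    refine ciSup_le ?_
    intro s
    obtain ⟨u, hu⟩ := key1 s
    have h1 : |f u - g s| < ε₀ := lt_of_le_of_lt (le_max_left _ _) hu
    have h2 : |(u:ℝ) - (s:ℝ)| < ε₀ := lt_of_le_of_lt (le_max_right _ _) hu
    have h3 : |h (f u) - h (g s)| ≤ |f u - g s| := hlip _ _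
    have h4 : |(s:ℝ) - t| ≥ |(u:ℝ) - t| - |(u:ℝ) - (s:ℝ)| := by
      have := abs_sub_abs_le_abs_sub ((u:ℝ) - t) ((s:ℝ) - t)
      have h5 : |(u:ℝ) - t - ((s:ℝ) - t)| = |(u:ℝ) - (s:ℝ)| := by ring_nf
      linarith [abs_sub_abs_le_abs_sub ((u:ℝ) - t) ((s:ℝ) - t), le_of_eq h5]
    have h6 : h (f u) - |(u:ℝ) - t| ≤ SmoothL h f t := le_ciSup hbddf u
    have h7 : h (g s) ≤ h (f u) + |f u - g s| := by
      have := abs_sub_le_iff.mp h3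
      linarith [this.2]
    linarith
  have hfg : SmoothL h f t ≤ SmoothL h g t + 2 * ε₀ := by
    refine ciSup_le ?_
    intro s
    obtain ⟨u, hu⟩ := key2 s
    have h1 : |f s - g u| < ε₀ := lt_of_le_of_lt (le_max_left _ _) hu
    have h2 : |(s:ℝ) - (u:ℝ)| < ε₀ := lt_of_le_of_lt (le_max_right _ _) hu
    have h3 : |h (f s) - h (g u)| ≤ |f s - g u| := hlip _ _
    have h4 : |(s:ℝ) - t| ≥ |(u:ℝ) - t| - |(s:ℝ) - (u:ℝ)| := by
      have h5 : |(u:ℝ) - t - ((s:ℝ) - t)| = |(s:ℝ) - (u:ℝ)| := by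
        rw [← abs_neg]; ring_nf
      linarith [abs_sub_abs_le_abs_sub ((u:ℝ) - t) ((s:ℝ) - t), le_of_eq h5]
    have h6 : h (g u) - |(u:ℝ) - t| ≤ SmoothL h g t := le_ciSup hbddg u
    have h7 : h (f s) ≤ h (g u) + |f s - g u| := by
      have := abs_sub_le_iff.mp h3
      linarith [this.1]
    linarith
  rw [abs_sub_lt_iff]
  constructor <;> linarith
end

section
/- If two pseudometrics m, m' on M satisfy |m(x,y) − m'(x,y)| ≤ δ for all x,y, then the Skorohod J2 distances satisfy |J(m)(f,g) − J(m')(f,g)| ≤ δ for all cadlag f, g. -/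
lemma aux_sup_inf {ι : Type*} [Nonempty ι] (h h' : ι → ι → ℝ) (δ : ℝ)
    (h0 : ∀ a b, 0 ≤ h a b) (h0' : ∀ a b, 0 ≤ h' a b) (h1' : ∀ a, h' a a ≤ 1)
    (hle : ∀ a b, h a b ≤ h' a b + δ) :
    (⨆ a, ⨅ b, h a b) ≤ (⨆ a, ⨅ b, h' a b) + δ := by
  apply ciSup_le
  intro a
  have bdd' : ∀ a', BddBelow (Set.range (h' a')) := fun a' =>
    ⟨0, by rintro _ ⟨b, rfl⟩; exact h0' a' b⟩
  have step1 : (⨅ b, h a b) ≤ (⨅ b, h' a b) + δ := by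
    rw [ciInf_add (bdd' a)]
    exact ciInf_mono ⟨0, by rintro _ ⟨b, rfl⟩; exact h0 a b⟩ (hle a)
  have step2 : (⨅ b, h' a b) ≤ ⨆ a', ⨅ b, h' a' b := by
    apply le_ciSup (f := fun a' => ⨅ b, h' a' b)
    refine ⟨1, ?_⟩
    rintro _ ⟨a', rfl⟩
    exact le_trans (ciInf_le (bdd' a') a') (h1' a')
  linarith

lemma J_le_J_add {M : Type*} (m m' : M → M → ℝ)
    (hb : Bounded1 m) (hb' : Bounded1 m') (δ : ℝ) (hδ : 0 ≤ δ)
    (hle : ∀ x y, m x y ≤ m' x y + δ) (f g : ℝ → M) :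
    J m f g ≤ J m' f g + δ := by
  haveI : Nonempty (Set.Ici (0:ℝ)) := ⟨⟨0, Set.self_mem_Ici⟩⟩
  have key : ∀ x y : M, ∀ c : ℝ, 0 ≤ c → max (m x y) c ≤ max (m' x y) c + δ := by
    intro x y c hc
    rw [← max_add_add_right]
    exact max_le_max (hle x y) (by linarith)
  unfold J
  rw [← max_add_add_right]
  apply max_le_max
  · apply aux_sup_inf
    · intro a b; exact le_max_of_le_left (hb _ _).1
    · intro a b; exact le_max_of_le_left (hb' _ _).1
    · intro a; simp only [sub_self, abs_zero]
      exact max_le (hb' _ _).2 zero_le_one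
    · intro a b; exact key _ _ _ (abs_nonneg _)
  · apply aux_sup_inf
    · intro a b; exact le_max_of_le_left (hb _ _).1
    · intro a b; exact le_max_of_le_left (hb' _ _).1
    · intro a; simp only [sub_self, abs_zero]
      exact max_le (hb' _ _).2 zero_le_one
    · intro a b; exact key _ _ _ (abs_nonneg _)

theorem skorohod_close_of_metrics_close {M : Type*}
    (m m' : M → M → ℝ) (hm : IsPseudometric m) (hm' : IsPseudometric m')
    (hb : Bounded1 m) (hb' : Bounded1 m')
    (δ : ℝ) (hδ : 0 ≤ δ) (hclose : ∀ x y, |m x y - m' x y| ≤ δ)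
    (f g : ℝ → M) (hf : Cadlag m f) (hg : Cadlag m g) :
    |J m f g - J m' f g| ≤ δ := by
  have h1 : J m f g ≤ J m' f g + δ :=
    J_le_J_add m m' hb hb' δ hδ
      (fun x y => by have := abs_le.mp (hclose x y); linarith) f g
  have h2 : J m' f g ≤ J m f g + δ :=
    J_le_J_add m' m hb' hb δ hδ
      (fun x y => by have := abs_le.mp (hclose x y); linarith) f g
  rw [abs_sub_le_iff]
  constructor <;> linarith
end

section
/- If two pseudometrics m, m' on M induce the same uniformity, then the Skorohod J2 pseudometrics J(m) and J(m') induce the same uniformity on the space of cadlag functions [0,∞) → M. -/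
/-- The uniformity induced by a pseudometric: all sets containing some
`K_m^ε = {(x,y) : m x y < ε}`, `ε > 0`. -/
def unifOf {S : Type*} (m : S → S → ℝ) : Set (Set (S × S)) :=
  {E | ∃ ε > (0:ℝ), {p : S × S | m p.1 p.2 < ε} ⊆ E}

instance : Nonempty (Set.Ici (0:ℝ)) := ⟨⟨0, Set.mem_Ici.mpr le_rfl⟩⟩

lemma key {M : Type*} (m m' : M → M → ℝ) (hb : Bounded1 m) (hb' : Bounded1 m')
    {δ ε : ℝ} (hδε : δ ≤ ε) (h : ∀ x y, m x y < δ → m' x y < ε)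
    (f g : ℝ → M) (hfg : J m f g < δ) : J m' f g ≤ ε := by
  have h1 := (max_lt_iff.mp hfg).1
  have h2 := (max_lt_iff.mp hfg).2
  have bdd : ∀ (u v : ℝ → M), BddAbove (Set.range fun t : Set.Ici (0:ℝ) =>
      ⨅ t' : Set.Ici (0:ℝ), max (m (u t) (v t')) |(t:ℝ) - (t':ℝ)|) := by
    intro u v
    refine ⟨1, ?_⟩
    rintro x ⟨t, rfl⟩
    refine le_trans (ciInf_le ⟨0, ?_⟩ t) ?_
    · rintro y ⟨t', rfl⟩
      exact le_max_of_le_left (hb _ _).1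
    · exact max_le (hb _ _).2 (by simp)
  have bddb : ∀ (u v : ℝ → M) (t : Set.Ici (0:ℝ)), BddBelow (Set.range fun t' : Set.Ici (0:ℝ) =>
      max (m' (u t) (v t')) |(t:ℝ) - (t':ℝ)|) := by
    intro u v t
    refine ⟨0, ?_⟩
    rintro y ⟨t', rfl⟩
    exact le_max_of_le_left (hb' _ _).1
  refine max_le (ciSup_le fun t => ?_) (ciSup_le fun t' => ?_)
  · have ht : (⨅ t' : Set.Ici (0:ℝ), max (m (f t) (g t')) |(t:ℝ) - (t':ℝ)|) < δ :=
      lt_of_le_of_lt (le_ciSup (bdd f g) t) h1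
    obtain ⟨t', ht'⟩ := exists_lt_of_ciInf_lt ht
    refine le_trans (ciInf_le (bddb f g t) t') ?_
    exact max_le (h _ _ (lt_of_le_of_lt (le_max_left _ _) ht')).le
      (le_trans (le_of_lt (lt_of_le_of_lt (le_max_right _ _) ht')) hδε)
  · have bdd2 : BddAbove (Set.range fun t' : Set.Ici (0:ℝ) =>
        ⨅ t : Set.Ici (0:ℝ), max (m (f t) (g t')) |(t:ℝ) - (t':ℝ)|) := by
      refine ⟨1, ?_⟩
      rintro x ⟨s, rfl⟩
      refine le_trans (ciInf_le ⟨0, ?_⟩ s) ?_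
      · rintro y ⟨u, rfl⟩
        exact le_max_of_le_left (hb _ _).1
      · exact max_le (hb _ _).2 (by simp)
    have ht : (⨅ t : Set.Ici (0:ℝ), max (m (f t) (g t')) |(t:ℝ) - (t':ℝ)|) < δ :=
      lt_of_le_of_lt (le_ciSup bdd2 t') h2
    obtain ⟨t, ht''⟩ := exists_lt_of_ciInf_lt ht
    have bddb2 : BddBelow (Set.range fun s : Set.Ici (0:ℝ) =>
        max (m' (f s) (g t')) |(s:ℝ) - (t':ℝ)|) := by
      refine ⟨0, ?_⟩
      rintro y ⟨s, rfl⟩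
      exact le_max_of_le_left (hb' _ _).1
    refine le_trans (ciInf_le bddb2 t) ?_
    exact max_le (h _ _ (lt_of_le_of_lt (le_max_left _ _) ht'')).le
      (le_trans (le_of_lt (lt_of_le_of_lt (le_max_right _ _) ht'')) hδε)

lemma half {M α : Type*} (m m' : M → M → ℝ) (hb : Bounded1 m) (hb' : Bounded1 m')
    (co : α → (ℝ → M))
    (htr : ∀ ε > (0:ℝ), ∃ δ > (0:ℝ), ∀ x y, m x y < δ → m' x y < ε) :
    unifOf (fun f g : α => J m' (co f) (co g)) ⊆ unifOf (fun f g : α => J m (co f) (co g)) := by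
  rintro E ⟨ε, hε, hE⟩
  obtain ⟨δ0, hδ0, hδ⟩ := htr (ε/2) (by positivity)
  refine ⟨min δ0 (ε/2), by positivity, fun p hp => hE ?_⟩
  have := key m m' hb hb' (min_le_right δ0 (ε/2))
    (fun x y hxy => hδ x y (lt_of_lt_of_le hxy (min_le_left _ _))) (co p.1) (co p.2) hp
  exact lt_of_le_of_lt this (by linarith)

lemma main_thm {M : Type*}
    (m m' : M → M → ℝ)
    (hb : Bounded1 m) (hb' : Bounded1 m')
    (huni : unifOf m = unifOf m') (P : (ℝ → M) → Prop) :
    unifOf (fun f g : {f : ℝ → M // P f} => J m f.1 g.1) =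
      unifOf (fun f g : {f : ℝ → M // P f} => J m' f.1 g.1) := by
  have htr : ∀ ε > (0:ℝ), ∃ δ > (0:ℝ), ∀ x y, m x y < δ → m' x y < ε := by
    intro ε hε
    have hmem : {p : M × M | m' p.1 p.2 < ε} ∈ unifOf m' := ⟨ε, hε, subset_rfl⟩
    rw [← huni] at hmem
    obtain ⟨δ, hδ, hs⟩ := hmem
    exact ⟨δ, hδ, fun x y h => hs (a := (x, y)) h⟩
  have htr' : ∀ ε > (0:ℝ), ∃ δ > (0:ℝ), ∀ x y, m' x y < δ → m x y < ε := by
    intro ε hε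
    have hmem : {p : M × M | m p.1 p.2 < ε} ∈ unifOf m := ⟨ε, hε, subset_rfl⟩
    rw [huni] at hmem
    obtain ⟨δ, hδ, hs⟩ := hmem
    exact ⟨δ, hδ, fun x y h => hs (a := (x, y)) h⟩
  exact Set.Subset.antisymm (half m' m hb' hb _ htr') (half m m' hb hb' _ htr)

theorem skorohod_uniformity_invariant {M : Type*}
    (m m' : M → M → ℝ) (hm : IsPseudometric m) (hm' : IsPseudometric m')
    (hb : Bounded1 m) (hb' : Bounded1 m')
    (huni : unifOf m = unifOf m') :
    unifOf (fun f g : {f : ℝ → M // Cadlag m f} => J m f.1 g.1) =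
      unifOf (fun f g : {f : ℝ → M // Cadlag m f} => J m' f.1 g.1) :=
  main_thm m m' hb hb' huni (Cadlag m)
end

section
/- The hitting-time functional is 1-Lipschitz for the Skorohod J2 metric in the following sense: let A ⊆ M be a set such that m(x,y) ≥ 1 whenever x ∈ A and y ∉ A, and define Hit_A(f) = inf{t : f(t) ∈ A} for cadlag f. If J(m)(f,g) < ε < 1, then |Hit_A(f) − Hit_A(g)| ≤ ε. -/
/-- Hitting time of a set `A` by a path `f` (restricted to times `t ≥ 0`),
with value `∞` if `A` is never hit. -/
noncomputable def Hit {M : Type*} (A : Set M) (f : ℝ → M) : ENNReal :=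
  ⨅ t : {t : ℝ // 0 ≤ t ∧ f t ∈ A}, ENNReal.ofReal t.1

/-- Extracting a witness from `sup inf F < ε`. -/
lemma aux_sup_inf_lt (F : Set.Ici (0:ℝ) → Set.Ici (0:ℝ) → ℝ)
    (h0 : ∀ a b, 0 ≤ F a b) (h1 : ∀ a, F a a ≤ 1) (ε : ℝ)
    (h : (⨆ a, ⨅ b, F a b) < ε) : ∀ a, ∃ b, F a b < ε := by
  have hbddB : ∀ a, BddBelow (Set.range (F a)) :=
    fun a => ⟨0, by rintro x ⟨b, rfl⟩; exact h0 a b⟩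
  have hbddA : BddAbove (Set.range fun a => ⨅ b, F a b) := by
    refine ⟨1, ?_⟩
    rintro x ⟨a, rfl⟩
    exact le_trans (ciInf_le (hbddB a) a) (h1 a)
  intro a
  have : (⨅ b, F a b) < ε := lt_of_le_of_lt (le_ciSup hbddA a) h
  exact exists_lt_of_ciInf_lt this

/-- One-sided comparison of hitting times. -/
lemma aux_one_sided {M : Type*} (A : Set M) (f g : ℝ → M) (ε : ℝ) (hε : 0 ≤ ε)
    (h : ∀ t : ℝ, 0 ≤ t → g t ∈ A → ∃ s : ℝ, 0 ≤ s ∧ f s ∈ A ∧ s ≤ t + ε) :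
    Hit A f ≤ Hit A g + ENNReal.ofReal ε := by
  conv_rhs => rw [Hit, ENNReal.iInf_add]
  refine le_iInf ?_
  rintro ⟨t, ht0, htA⟩
  obtain ⟨s, hs0, hsA, hst⟩ := h t ht0 htA
  calc Hit A f ≤ ENNReal.ofReal s := iInf_le _ (⟨s, hs0, hsA⟩ : {t : ℝ // 0 ≤ t ∧ f t ∈ A})
    _ ≤ ENNReal.ofReal (t + ε) := ENNReal.ofReal_le_ofReal hst
    _ = ENNReal.ofReal t + ENNReal.ofReal ε := ENNReal.ofReal_add ht0 hε

theorem hitting_time_lipschitz {M : Type*}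
    (m : M → M → ℝ) (hm : IsPseudometric m) (hb : Bounded1 m)
    (A : Set M) (hA : ∀ x ∈ A, ∀ y ∉ A, 1 ≤ m x y)
    (f g : ℝ → M) (hf : Cadlag m f) (hg : Cadlag m g)
    (ε : ℝ) (hε1 : ε < 1) (hJ : J m f g < ε) :
    Hit A f ≤ Hit A g + ENNReal.ofReal ε ∧
      Hit A g ≤ Hit A f + ENNReal.ofReal ε := by
  obtain ⟨hrefl, hsymm, _⟩ := hm
  set F1 : Set.Ici (0:ℝ) → Set.Ici (0:ℝ) → ℝ :=
    fun t t' => max (m (f t) (g t')) |(t:ℝ) - (t':ℝ)| with hF1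
  set F2 : Set.Ici (0:ℝ) → Set.Ici (0:ℝ) → ℝ :=
    fun t' t => max (m (f t) (g t')) |(t:ℝ) - (t':ℝ)| with hF2
  have hJ1 : (⨆ a, ⨅ b, F1 a b) < ε := lt_of_le_of_lt (le_max_left _ _) hJ
  have hJ2 : (⨆ a, ⨅ b, F2 a b) < ε := lt_of_le_of_lt (le_max_right _ _) hJ
  have h0 : ∀ (u v : ℝ → M) (a b : Set.Ici (0:ℝ)),
      (0:ℝ) ≤ max (m (u a) (v b)) |(a:ℝ) - (b:ℝ)| :=
    fun u v a b => le_trans (abs_nonneg _) (le_max_right _ _)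
  have h1 : ∀ (u v : ℝ → M) (a : Set.Ici (0:ℝ)),
      max (m (u a) (v a)) |(a:ℝ) - (a:ℝ)| ≤ 1 := by
    intro u v a
    rw [sub_self, abs_zero]
    exact max_le (hb _ _).2 zero_le_one
  have hW1 := aux_sup_inf_lt F1 (fun a b => h0 f g a b) (fun a => h1 f g a) ε hJ1
  have hW2 := aux_sup_inf_lt F2 (fun a b => h0 f g b a) (fun a => h1 f g a) ε hJ2
  -- 0 ≤ ε
  have hε0 : 0 ≤ ε := by
    obtain ⟨b, hbw⟩ := hW1 ⟨0, Set.self_mem_Ici⟩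
    exact le_of_lt (lt_of_le_of_lt (h0 f g _ _) hbw)
  constructor
  · refine aux_one_sided A f g ε hε0 ?_
    intro t ht0 htA
    obtain ⟨⟨s, hs0⟩, hsw⟩ := hW2 ⟨t, ht0⟩
    have hmlt : m (f s) (g t) < ε := lt_of_le_of_lt (le_max_left _ _) hsw
    have habs : |s - t| < ε := lt_of_le_of_lt (le_max_right _ _) hsw
    refine ⟨s, hs0, ?_, ?_⟩
    · by_contra hfs
      have := hA (g t) htA (f s) hfs
      rw [hsymm] at this
      linarith
    · have := abs_lt.mp habs
      linarith [this.2]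
  · refine aux_one_sided A g f ε hε0 ?_
    intro t ht0 htA
    obtain ⟨⟨s, hs0⟩, hsw⟩ := hW1 ⟨t, ht0⟩
    have hmlt : m (f t) (g s) < ε := lt_of_le_of_lt (le_max_left _ _) hsw
    have habs : |(t:ℝ) - s| < ε := lt_of_le_of_lt (le_max_right _ _) hsw
    refine ⟨s, hs0, ?_, ?_⟩
    · by_contra hgs
      have := hA (f t) htA (g s) hgs
      linarith
    · have := abs_lt.mp habs
      linarith [this.1]
end
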